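/- Let f : ℝ^{d1} × ℝ^{d2} → ℝ be differentiable with ℓ-Lipschitz gradient and μ-strongly concave in y for every fixed x (0 < μ ≤ ℓ), let κ = ℓ/μ, Φ(x) = max_{y} f(x,y), let μ₁, μ₂ > 0, and let f_{μ₁}(x,y) = E_ν[f(x+μ₁ν,y)] (ν ~ N(0,I_{d1})) and f_{μ₂}(x,y) = E_ω[f(x,y+μ₂ω)] (ω ~ N(0,I_{d2})) be the partial Gaussian smoothings. Then for every (x,y) and every v ∈ ℝ^{d1}, u ∈ ℝ^{d2}: ‖∇Φ(x)‖² ≤ 6κ²‖∇_y f_{μ₂}(x,y)‖² + 6(‖∇_x f_{μ₁}(x,y) − v‖² + ‖∇_y f_{μ₂}(x,y) − u‖²) + 3‖v‖² + 3π(d1,d2,μ₁,μ₂), where π(d1,d2,μ₁,μ₂) = (μ₂²(κ²+1)/2)ℓ²(d2+3)³ + (μ₁²/2)ℓ²(d1+3)³. -/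

import Mathlib

/-!
By strong concavity the maximiser `y⋆` is `κ`-Lipschitz, so Danskin's argument gives
`∇Φ(x) = ∇ₓf(x, y⋆(x))`, which is within `ℓ‖y⋆(x) - y‖ ≤ κ‖∇_y f(x, y)‖` of `∇ₓf(x, y)`.
Smoothing along a random direction `ν` moves an `L`-Lipschitz gradient by at most
`L|m|E‖ν‖`, because `∇f_m(x) = E[∇f(x + mν)]`; for `ν ~ N(0, I_d)`,
`E‖ν‖ ≤ (1 + E‖ν‖²)/2 = (1 + d)/2`.
The triangle inequality and `(a + b + c)² ≤ 3(a² + b² + c²)` assemble the bound.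
-/

open MeasureTheory ProbabilityTheory

noncomputable def stdGaussian (d : ℕ) : Measure (EuclideanSpace ℝ (Fin d)) :=
  (Measure.pi fun _ : Fin d => gaussianReal 0 1).map
    (EuclideanSpace.equiv (Fin d) ℝ).symm

open Set Filter Asymptotics
open scoped NNReal RealInnerProductSpace

theorem lipschitzWith_of_dist_sq_le {α β : Type*} [PseudoMetricSpace α] [PseudoMetricSpace β]
    {φ : α → β} {ℓ : ℝ} (h : ∀ a b, dist (φ a) (φ b) ^ 2 ≤ ℓ ^ 2 * dist a b ^ 2) :
    LipschitzWith ‖ℓ‖₊ φ :=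
  LipschitzWith.of_dist_le_mul fun a b =>
    (pow_le_pow_iff_left₀ dist_nonneg (by positivity) two_ne_zero).1
      (by rw [coe_nnnorm, Real.norm_eq_abs, mul_pow, sq_abs]; exact h a b)

section Gradient

variable {E : Type*} [NormedAddCommGroup E] [InnerProductSpace ℝ E] [CompleteSpace E]
  {g : E → ℝ}

theorem hasGradientAt_of_abs_sub_sub_inner_le {G x : E} {C : ℝ}
    (hg : ∀ h, |g (x + h) - g x - ⟪G, h⟫| ≤ C * ‖h‖ ^ 2) : HasGradientAt g G x := by
  rw [hasGradientAt_iff_isLittleO_nhds_zero]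
  refine IsBigO.trans_isLittleO ?_ (isLittleO_norm_pow_id one_lt_two)
  exact IsBigO.of_bound C (Eventually.of_forall fun h => by simpa using hg h)

theorem norm_fderiv_sub_fderiv (a b : E) :
    ‖fderiv ℝ g a - fderiv ℝ g b‖ = ‖gradient g a - gradient g b‖ := by
  rw [← toDual_gradient, ← toDual_gradient, ← map_sub, LinearIsometryEquiv.norm_map]

theorem abs_sub_sub_inner_gradient_le {K : ℝ≥0} (hg : Differentiable ℝ g)
    (hK : LipschitzWith K (gradient g)) (a b : E) :
    |g b - g a - ⟪gradient g a, b - a⟫| ≤ K * ‖b - a‖ ^ 2 := by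
  have hderiv : ∀ z ∈ Metric.closedBall a ‖b - a‖,
      ‖fderiv ℝ g z - fderiv ℝ g a‖ ≤ K * ‖b - a‖ := fun z hz => by
    rw [norm_fderiv_sub_fderiv]
    exact (hK.norm_sub_le z a).trans (by gcongr; rwa [← dist_eq_norm])
  have := (convex_closedBall a ‖b - a‖).norm_image_sub_le_of_norm_fderiv_le' (fun z _ => hg z)
    hderiv (Metric.mem_closedBall_self (norm_nonneg _)) (y := b) (by simp [dist_eq_norm])
  rwa [← inner_gradient_left, Real.norm_eq_abs, mul_assoc, ← sq] at this

theorem IsLocalMax.gradient_eq_zero {y : E} (h : IsLocalMax g y) : gradient g y = 0 := by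
  simp [gradient, h.fderiv_eq_zero]

theorem mul_norm_sub_le_norm_gradient {μ : ℝ} {y₀ : E}
    (hconc : ∀ y y', g y ≤ g y' + ⟪gradient g y', y - y'⟫ - μ / 2 * ‖y - y'‖ ^ 2)
    (hmax : IsMaxOn g univ y₀) (y : E) : μ * ‖y - y₀‖ ≤ ‖gradient g y‖ := by
  have hy₀ := hconc y y₀
  rw [(hmax.isLocalMax univ_mem).gradient_eq_zero, inner_zero_left] at hy₀
  have hy := hconc y₀ y
  have hcs : ⟪gradient g y, y₀ - y⟫ ≤ ‖gradient g y‖ * ‖y - y₀‖ :=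
    (real_inner_le_norm _ _).trans_eq (by rw [norm_sub_rev])
  rw [norm_sub_rev] at hy
  -- adding `hy` and `hy₀` gives `μ‖y - y₀‖² ≤ ⟪∇g y, y₀ - y⟫`
  rcases (norm_nonneg (y - y₀)).eq_or_lt with hr | hr
  · rw [← hr, mul_zero]; exact norm_nonneg _
  · exact le_of_mul_le_mul_right (by nlinarith) hr

end Gradient

section Argmax

variable {E F : Type*} [NormedAddCommGroup E] [InnerProductSpace ℝ E] [CompleteSpace E]
  [PseudoMetricSpace F] {f : E → F → ℝ} {y₀ : E → F} {K : ℝ≥0}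

theorem hasGradientAt_comp_argmax {C : ℝ≥0} (hf : ∀ y, Differentiable ℝ fun x => f x y)
    (hfx : ∀ y, LipschitzWith K (gradient fun x => f x y))
    (hfxy : ∀ x, LipschitzWith K fun y => gradient (fun x' => f x' y) x)
    (hmax : ∀ x, IsMaxOn (f x) univ (y₀ x)) (hy₀ : LipschitzWith C y₀) (x : E) :
    HasGradientAt (fun x => f x (y₀ x)) (gradient (fun x' => f x' (y₀ x)) x) x := by
  set G := gradient (fun x' => f x' (y₀ x)) x
  -- lower bound: `y₀ x` competes at `x + h`; upper bound: `y₀ (x + h)` competes at `x`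
  refine hasGradientAt_of_abs_sub_sub_inner_le (C := K * (1 + C)) fun h => abs_le.2 ⟨?_, ?_⟩
  · have hmax' : f (x + h) (y₀ x) ≤ f (x + h) (y₀ (x + h)) := hmax (x + h) (mem_univ _)
    have htaylor := abs_le.1 <| abs_sub_sub_inner_gradient_le (hf (y₀ x)) (hfx (y₀ x)) x (x + h)
    rw [add_sub_cancel_left] at htaylor
    have : 0 ≤ (K * C : ℝ) * ‖h‖ ^ 2 := by positivity
    linarith [htaylor.1]
  · have hmax' : f x (y₀ (x + h)) ≤ f x (y₀ x) := hmax x (mem_univ _)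
    have htaylor := abs_le.1 <|
      abs_sub_sub_inner_gradient_le (hf (y₀ (x + h))) (hfx (y₀ (x + h))) x (x + h)
    rw [add_sub_cancel_left] at htaylor
    have hcross : ⟪gradient (fun x' => f x' (y₀ (x + h))) x - G, h⟫ ≤ K * C * ‖h‖ ^ 2 :=
      calc _ ≤ ‖gradient (fun x' => f x' (y₀ (x + h))) x - G‖ * ‖h‖ := real_inner_le_norm _ _
        _ ≤ K * (C * ‖h‖) * ‖h‖ := by
          gcongr
          rw [← dist_eq_norm]
          refine ((hfxy x).dist_le_mul _ _).trans ?_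
          gcongr
          simpa [dist_eq_norm] using hy₀.dist_le_mul (x + h) x
        _ = K * C * ‖h‖ ^ 2 := by ring
    rw [inner_sub_left] at hcross
    linarith [htaylor.2]

end Argmax

section StronglyConcave

variable {E F : Type*} [PseudoMetricSpace E]
  [NormedAddCommGroup F] [InnerProductSpace ℝ F] [CompleteSpace F]
  {f : E → F → ℝ} {y₀ : E → F} {K : ℝ≥0}

theorem lipschitzWith_argmax {μ : ℝ} (hμ : 0 < μ)
    (hconc : ∀ x y y', f x y ≤ f x y' + ⟪gradient (f x) y', y - y'⟫ - μ / 2 * ‖y - y'‖ ^ 2)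
    (hfyx : ∀ y, LipschitzWith K fun x => gradient (f x) y)
    (hmax : ∀ x, IsMaxOn (f x) univ (y₀ x)) :
    LipschitzWith (K / μ.toNNReal) y₀ := by
  refine LipschitzWith.of_dist_le_mul fun x x' => ?_
  have hgrad : gradient (f x) (y₀ x) = 0 := ((hmax x).isLocalMax univ_mem).gradient_eq_zero
  have hconc := mul_norm_sub_le_norm_gradient (hconc x') (hmax x') (y₀ x)
  have hlip := (hfyx (y₀ x)).dist_le_mul x' x
  rw [dist_eq_norm, hgrad, sub_zero, dist_comm] at hlip
  rw [NNReal.coe_div, Real.coe_toNNReal _ hμ.le, div_mul_eq_mul_div, le_div_iff₀ hμ,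
    dist_eq_norm, mul_comm]
  exact hconc.trans hlip

end StronglyConcave

section PartialGradients

variable {E F : Type*} [NormedAddCommGroup E] [InnerProductSpace ℝ E] [CompleteSpace E]
  [NormedAddCommGroup F] [InnerProductSpace ℝ F] [CompleteSpace F] {f : E → F → ℝ}

theorem lipschitzWith_partial_gradients {ℓ : ℝ}
    (hlip : ∀ x x' y y',
      ‖gradient (fun x'' => f x'' y) x - gradient (fun x'' => f x'' y') x'‖ ^ 2 +
          ‖gradient (f x) y - gradient (f x') y'‖ ^ 2 ≤
        ℓ ^ 2 * (‖x - x'‖ ^ 2 + ‖y - y'‖ ^ 2)) :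
    (∀ y, LipschitzWith ‖ℓ‖₊ (gradient fun x => f x y)) ∧
      (∀ x, LipschitzWith ‖ℓ‖₊ fun y => gradient (fun x' => f x' y) x) ∧
      (∀ y, LipschitzWith ‖ℓ‖₊ fun x => gradient (f x) y) ∧
      (∀ x, LipschitzWith ‖ℓ‖₊ (gradient (f x))) := by
  refine ⟨fun y => ?_, fun x => ?_, fun y => ?_, fun x => ?_⟩ <;>
    refine lipschitzWith_of_dist_sq_le fun a b => ?_
  · simpa [dist_eq_norm] using (le_add_of_nonneg_right (sq_nonneg _)).trans (hlip a b y y)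
  · simpa [dist_eq_norm] using (le_add_of_nonneg_right (sq_nonneg _)).trans (hlip x x a b)
  · simpa [dist_eq_norm] using (le_add_of_nonneg_left (sq_nonneg _)).trans (hlip a b y y)
  · simpa [dist_eq_norm] using (le_add_of_nonneg_left (sq_nonneg _)).trans (hlip x x a b)

theorem norm_gradient_argmax_sub_le {y₀ : E → F} {K : ℝ≥0} {μ : ℝ} (hμ : 0 < μ)
    (hconc : ∀ x y y', f x y ≤ f x y' + ⟪gradient (f x) y', y - y'⟫ - μ / 2 * ‖y - y'‖ ^ 2)
    (hfxy : ∀ x, LipschitzWith K fun y => gradient (fun x' => f x' y) x)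
    (hmax : ∀ x, IsMaxOn (f x) univ (y₀ x)) (x : E) (y : F) :
    ‖gradient (fun x' => f x' (y₀ x)) x - gradient (fun x' => f x' y) x‖ ≤
      K / μ * ‖gradient (f x) y‖ :=
  calc _ ≤ K * ‖y₀ x - y‖ := (hfxy x).norm_sub_le (y₀ x) y
    _ ≤ K * (‖gradient (f x) y‖ / μ) := by
      gcongr
      rw [le_div_iff₀ hμ, norm_sub_rev, mul_comm]
      exact mul_norm_sub_le_norm_gradient (hconc x) (hmax x) y
    _ = _ := by ring

end PartialGradients

section Smoothing

variable {E : Type*} [NormedAddCommGroup E] [InnerProductSpace ℝ E] [MeasurableSpace E]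

noncomputable def smoothing (γ : Measure E) (m : ℝ) (g : E → ℝ) (x : E) : ℝ :=
  ∫ ν, g (x + m • ν) ∂γ

variable [CompleteSpace E] [BorelSpace E] {γ : Measure E} [IsProbabilityMeasure γ] {g : E → ℝ}
  {K : ℝ≥0}

theorem integrable_comp_add_smul (hg : Differentiable ℝ g) (hK : LipschitzWith K (gradient g))
    (hγ : MemLp id 2 γ) (x : E) (m : ℝ) : Integrable (fun ν => g (x + m • ν)) γ := by
  refine (((integrable_const |g x|).add ((hγ.integrable one_le_two).norm.const_mul
    (‖gradient g x‖ * |m|))).add (hγ.integrable_norm_pow'.const_mul (K * m ^ 2))).mono'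
    (hg.continuous.comp (by fun_prop)).aestronglyMeasurable (Eventually.of_forall fun ν => ?_)
  have htaylor := abs_le.1 (abs_sub_sub_inner_gradient_le hg hK x (x + m • ν))
  have hcs := abs_le.1 (abs_real_inner_le_norm (gradient g x) (m • ν))
  rw [add_sub_cancel_left] at htaylor
  rw [norm_smul, Real.norm_eq_abs] at htaylor hcs
  rw [mul_pow, sq_abs] at htaylor
  simp only [Pi.add_apply, id, Real.norm_eq_abs, abs_le]
  constructor <;> linarith [le_abs_self (g x), neg_abs_le (g x)]

variable [SecondCountableTopology E]

theorem integrable_gradient_comp_add_smul (hK : LipschitzWith K (gradient g))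
    (hγ : Integrable id γ) (x : E) (m : ℝ) :
    Integrable (fun ν => gradient g (x + m • ν)) γ := by
  refine ((integrable_const ‖gradient g x‖).add (hγ.norm.const_mul (K * |m|))).mono'
    (hK.continuous.comp (by fun_prop)).aestronglyMeasurable (Eventually.of_forall fun ν => ?_)
  have hlip := hK.norm_sub_le (x + m • ν) x
  rw [add_sub_cancel_left, norm_smul, Real.norm_eq_abs, ← mul_assoc] at hlip
  exact (norm_le_norm_add_norm_sub' _ (gradient g x)).trans (by simp [hlip])

theorem hasGradientAt_smoothing (hg : Differentiable ℝ g) (hK : LipschitzWith K (gradient g))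
    (hγ : MemLp id 2 γ) (m : ℝ) (x : E) :
    HasGradientAt (smoothing γ m g) (∫ ν, gradient g (x + m • ν) ∂γ) x := by
  refine hasGradientAt_of_abs_sub_sub_inner_le (C := K) fun h => ?_
  have hint (x : E) := integrable_comp_add_smul hg hK hγ x m
  have hgradint := integrable_gradient_comp_add_smul hK (hγ.integrable one_le_two) x m
  rw [smoothing, smoothing, real_inner_comm, ← integral_inner hgradint,
    ← integral_sub (hint _) (hint _), ← integral_sub ?_ (hgradint.const_inner h)]
  swap
  · exact (hint _).sub (hint _)
  rw [← Real.norm_eq_abs]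
  refine (norm_integral_le_of_norm_le_const (Eventually.of_forall fun ν => ?_)).trans_eq
    (by rw [probReal_univ, mul_one])
  have htaylor := abs_sub_sub_inner_gradient_le hg hK (x + m • ν) (x + m • ν + h)
  rwa [add_sub_cancel_left, add_right_comm, real_inner_comm] at htaylor

theorem norm_gradient_smoothing_sub_le (hg : Differentiable ℝ g)
    (hK : LipschitzWith K (gradient g)) (hγ : MemLp id 2 γ) (m : ℝ) (x : E) :
    ‖gradient (smoothing γ m g) x - gradient g x‖ ≤ K * |m| * ∫ ν, ‖ν‖ ∂γ := by
  have hγ₁ : Integrable id γ := hγ.integrable one_le_two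
  have hgradint := integrable_gradient_comp_add_smul hK hγ₁ x m
  rw [(hasGradientAt_smoothing hg hK hγ m x).gradient, ← integral_const_mul]
  calc ‖∫ ν, gradient g (x + m • ν) ∂γ - gradient g x‖
      = ‖∫ ν, (gradient g (x + m • ν) - gradient g x) ∂γ‖ := by
        rw [integral_sub hgradint (integrable_const _), integral_const, probReal_univ, one_smul]
    _ ≤ ∫ ν, ‖gradient g (x + m • ν) - gradient g x‖ ∂γ := norm_integral_le_integral_norm _
    _ ≤ ∫ ν, K * |m| * ‖ν‖ ∂γ := by
        refine integral_mono (hgradint.sub (integrable_const _)).norm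
          (hγ₁.norm.const_mul _) fun ν => ?_
        simpa [norm_smul, mul_assoc] using hK.norm_sub_le (x + m • ν) x

end Smoothing

section Gaussian

theorem stdGaussian_eq (d : ℕ) :
    stdGaussian d = ProbabilityTheory.stdGaussian (EuclideanSpace ℝ (Fin d)) :=
  map_pi_eq_stdGaussian

instance (d : ℕ) : IsProbabilityMeasure (stdGaussian d) := by
  rw [stdGaussian_eq]; infer_instance

theorem memLp_two_id_stdGaussian (d : ℕ) : MemLp id 2 (stdGaussian d) := by
  rw [stdGaussian_eq]; exact IsGaussian.memLp_two_id

theorem integral_sq_gaussianReal_zero_one : ∫ x, x ^ 2 ∂gaussianReal 0 1 = 1 := by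
  simpa [variance_id_gaussianReal] using (variance_of_integral_eq_zero
    (μ := gaussianReal 0 1) aemeasurable_id integral_id_gaussianReal).symm

theorem integral_norm_sq_stdGaussian (d : ℕ) : ∫ x, ‖x‖ ^ 2 ∂stdGaussian d = d := by
  have hsq : Integrable (fun x : ℝ => x ^ 2) (gaussianReal 0 1) :=
    (memLp_id_gaussianReal 2).integrable_norm_pow' |>.congr (by simp)
  have heval (i : Fin d) := measurePreserving_eval (fun _ : Fin d => gaussianReal 0 1) i
  have hcoord (i : Fin d) : ∫ p, p i ^ 2 ∂(Measure.pi fun _ : Fin d => gaussianReal 0 1) = 1 := by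
    conv_rhs => rw [← integral_sq_gaussianReal_zero_one, ← (heval i).map_eq]
    rw [integral_map (measurable_pi_apply i).aemeasurable (by fun_prop)]
  rw [_root_.stdGaussian, integral_map (by fun_prop) (by fun_prop)]
  simp_rw [EuclideanSpace.real_norm_sq_eq]
  change ∫ p : Fin d → ℝ, ∑ i, p i ^ 2 ∂_ = _
  rw [integral_finsetSum (f := fun i (p : Fin d → ℝ) => p i ^ 2) _
    fun i _ => (heval i).integrable_comp_of_integrable hsq]
  simp [hcoord]

theorem integral_norm_stdGaussian_le (d : ℕ) : ∫ x, ‖x‖ ∂stdGaussian d ≤ (1 + d) / 2 := by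
  have hγ := memLp_two_id_stdGaussian d
  have hsq : Integrable (fun x => ‖x‖ ^ 2) (stdGaussian d) := hγ.integrable_norm_pow'
  calc ∫ x, ‖x‖ ∂stdGaussian d ≤ ∫ x, (1 + ‖x‖ ^ 2) / 2 ∂stdGaussian d :=
        integral_mono (hγ.integrable one_le_two).norm
          (((integrable_const 1).add hsq).div_const 2)
          fun x => by nlinarith [sq_nonneg (‖x‖ - 1)]
    _ = (1 + d) / 2 := by
        rw [integral_div, integral_add (integrable_const 1) hsq]
        simp [integral_norm_sq_stdGaussian]

theorem sq_mul_integral_norm_stdGaussian_le (d : ℕ) (c : ℝ) :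
    (c * ∫ x, ‖x‖ ∂stdGaussian d) ^ 2 ≤ c ^ 2 * ((d : ℝ) + 3) ^ 3 / 4 := by
  have h0 : 0 ≤ ∫ x, ‖x‖ ∂stdGaussian d := integral_nonneg fun _ => norm_nonneg _
  have h1 := integral_norm_stdGaussian_le d
  have hd : (0 : ℝ) ≤ d := d.cast_nonneg
  have hsq : (∫ x, ‖x‖ ∂stdGaussian d) ^ 2 ≤ ((d : ℝ) + 3) ^ 3 / 4 :=
    calc _ ≤ ((1 + (d : ℝ)) / 2) ^ 2 := pow_le_pow_left₀ h0 h1 2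
      _ ≤ ((d : ℝ) + 3) ^ 3 / 4 := by nlinarith
  rw [mul_pow, mul_div_assoc]
  exact mul_le_mul_of_nonneg_left hsq (sq_nonneg c)

end Gaussian

theorem norm_sq_le_of_approximations {E F : Type*} [SeminormedAddCommGroup E]
    [SeminormedAddCommGroup F] {G gₓ sₓ v : E} {g_y s_y : F} {κ e₁ e₂ : ℝ} (hκ : 0 ≤ κ)
    (hG : ‖G - gₓ‖ ≤ κ * ‖g_y‖) (h₁ : ‖sₓ - gₓ‖ ≤ e₁) (h₂ : ‖s_y - g_y‖ ≤ e₂) :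
    ‖G‖ ^ 2 ≤ 6 * κ ^ 2 * ‖s_y‖ ^ 2 + 6 * ‖sₓ - v‖ ^ 2 + 3 * ‖v‖ ^ 2 +
      6 * κ ^ 2 * e₂ ^ 2 + 6 * e₁ ^ 2 := by
  have hgy : κ * ‖g_y‖ ≤ κ * (‖s_y‖ + e₂) := by
    gcongr
    linarith [norm_le_norm_add_norm_sub s_y g_y]
  have hG' : ‖G‖ ≤ κ * (‖s_y‖ + e₂) + (e₁ + ‖sₓ - v‖) + ‖v‖ := by
    linarith [norm_le_norm_add_norm_sub' G gₓ, norm_le_norm_add_norm_sub' gₓ sₓ,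
      norm_le_norm_add_norm_sub' sₓ v, norm_sub_rev gₓ sₓ]
  set a := κ * (‖s_y‖ + e₂)
  set b := e₁ + ‖sₓ - v‖
  calc ‖G‖ ^ 2 ≤ (a + b + ‖v‖) ^ 2 := pow_le_pow_left₀ (norm_nonneg G) hG' 2
    _ ≤ 3 * (a ^ 2 + b ^ 2 + ‖v‖ ^ 2) := by
      nlinarith [sq_nonneg (a - b), sq_nonneg (a - ‖v‖), sq_nonneg (b - ‖v‖)]
    _ ≤ 3 * (κ ^ 2 * (2 * (‖s_y‖ ^ 2 + e₂ ^ 2)) + 2 * (e₁ ^ 2 + ‖sₓ - v‖ ^ 2) + ‖v‖ ^ 2) := by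
      rw [mul_pow]
      gcongr <;> exact add_sq_le
    _ = _ := by ring

theorem zo_vrgda_stmt15_general (d1 d2 : ℕ)
    (f : EuclideanSpace ℝ (Fin d1) → EuclideanSpace ℝ (Fin d2) → ℝ)
    (ℓ μ μ₁ μ₂ : ℝ) (hμ : 0 < μ)
    (hdiff : Differentiable ℝ
      (fun p : EuclideanSpace ℝ (Fin d1) × EuclideanSpace ℝ (Fin d2) => f p.1 p.2))
    (hlip : ∀ x x' y y',
      ‖gradient (fun x'' => f x'' y) x - gradient (fun x'' => f x'' y') x'‖ ^ 2 +
          ‖gradient (f x) y - gradient (f x') y'‖ ^ 2 ≤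
        ℓ ^ 2 * (‖x - x'‖ ^ 2 + ‖y - y'‖ ^ 2))
    (hconc : ∀ x y y',
      f x y ≤ f x y' + (inner ℝ (gradient (f x) y') (y - y') : ℝ) - μ / 2 * ‖y - y'‖ ^ 2)
    (ystar : EuclideanSpace ℝ (Fin d1) → EuclideanSpace ℝ (Fin d2))
    (hystar : ∀ x, IsMaxOn (f x) Set.univ (ystar x)) :
    ∀ (x : EuclideanSpace ℝ (Fin d1)) (y : EuclideanSpace ℝ (Fin d2))
      (v : EuclideanSpace ℝ (Fin d1)) (u : EuclideanSpace ℝ (Fin d2)),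
      ‖gradient (fun x' => f x' (ystar x')) x‖ ^ 2 ≤
        6 * (ℓ / μ) ^ 2 *
            ‖gradient (fun y' => ∫ ω, f x (y' + μ₂ • ω) ∂(stdGaussian d2)) y‖ ^ 2 +
          6 * (‖gradient (fun x' => ∫ ν, f (x' + μ₁ • ν) y ∂(stdGaussian d1)) x - v‖ ^ 2 +
              ‖gradient (fun y' => ∫ ω, f x (y' + μ₂ • ω) ∂(stdGaussian d2)) y - u‖ ^ 2) +
          3 * ‖v‖ ^ 2 +
          3 * (μ₂ ^ 2 * ((ℓ / μ) ^ 2 + 1) / 2 * ℓ ^ 2 * ((d2 : ℝ) + 3) ^ 3 +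
              μ₁ ^ 2 / 2 * ℓ ^ 2 * ((d1 : ℝ) + 3) ^ 3) := by
  intro x y v u
  have hfx (y) : Differentiable ℝ fun x => f x y :=
    hdiff.comp (differentiable_id.prodMk (differentiable_const y))
  have hfy (x) : Differentiable ℝ (f x) :=
    hdiff.comp ((differentiable_const x).prodMk differentiable_id)
  obtain ⟨hℓx, hℓxy, hℓyx, hℓy⟩ := lipschitzWith_partial_gradients hlip
  have hΦ := (hasGradientAt_comp_argmax hfx hℓx hℓxy hystar
    (lipschitzWith_argmax hμ hconc hℓyx hystar) x).gradient
  have hsmooth₁ :=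
    norm_gradient_smoothing_sub_le (hfx y) (hℓx y) (memLp_two_id_stdGaussian d1) μ₁ x
  have hsmooth₂ :=
    norm_gradient_smoothing_sub_le (hfy x) (hℓy x) (memLp_two_id_stdGaussian d2) μ₂ y
  have hmain := norm_sq_le_of_approximations (v := v) (by positivity)
    (norm_gradient_argmax_sub_le hμ hconc hℓxy hystar x y) hsmooth₁ hsmooth₂
  have he₁ := sq_mul_integral_norm_stdGaussian_le d1 (‖ℓ‖₊ * |μ₁|)
  have he₂ := sq_mul_integral_norm_stdGaussian_le d2 (‖ℓ‖₊ * |μ₂|)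
  unfold smoothing at hmain
  simp only [coe_nnnorm, Real.norm_eq_abs, mul_pow, sq_abs, div_pow] at hmain he₁ he₂
  rw [hΦ, div_pow]
  have hd₂ : 0 ≤ ℓ ^ 2 * μ₂ ^ 2 * ((d2 : ℝ) + 3) ^ 3 := by positivity
  linarith [mul_le_mul_of_nonneg_left he₂ (by positivity : (0 : ℝ) ≤ ℓ ^ 2 / μ ^ 2),
    sq_nonneg ‖gradient (fun y' => ∫ ω, f x (y' + μ₂ • ω) ∂stdGaussian d2) y - u‖]

/-- under the nonconvex–strongly-concave assumptions, with
`Φ(x) = max_y f(x,y) = f(x, y*(x))`, `κ = ℓ/μ`, and partial Gaussian smoothings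
`f_{μ₁}(x,y) = E_ν[f(x+μ₁ν,y)]`, `f_{μ₂}(x,y) = E_ω[f(x,y+μ₂ω)]`, for every `(x,y)` and every
`v, u`:
`‖∇Φ(x)‖² ≤ 6κ²‖∇_y f_{μ₂}(x,y)‖² + 6(‖∇_x f_{μ₁}(x,y)−v‖² + ‖∇_y f_{μ₂}(x,y)−u‖²)
  + 3‖v‖² + 3π(d1,d2,μ₁,μ₂)`,
where `π(d1,d2,μ₁,μ₂) = (μ₂²(κ²+1)/2)ℓ²(d2+3)³ + (μ₁²/2)ℓ²(d1+3)³`. -/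
theorem zo_vrgda_stmt15 (d1 d2 : ℕ)
    (f : EuclideanSpace ℝ (Fin d1) → EuclideanSpace ℝ (Fin d2) → ℝ)
    (ℓ μ μ₁ μ₂ : ℝ) (hμ : 0 < μ) (hμℓ : μ ≤ ℓ) (hμ₁ : 0 < μ₁) (hμ₂ : 0 < μ₂)
    (hdiff : Differentiable ℝ
      (fun p : EuclideanSpace ℝ (Fin d1) × EuclideanSpace ℝ (Fin d2) => f p.1 p.2))
    (hlip : ∀ x x' y y',
      ‖gradient (fun x'' => f x'' y) x - gradient (fun x'' => f x'' y') x'‖ ^ 2 +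
          ‖gradient (f x) y - gradient (f x') y'‖ ^ 2 ≤
        ℓ ^ 2 * (‖x - x'‖ ^ 2 + ‖y - y'‖ ^ 2))
    (hconc : ∀ x y y',
      f x y ≤ f x y' + (inner ℝ (gradient (f x) y') (y - y') : ℝ) - μ / 2 * ‖y - y'‖ ^ 2)
    (ystar : EuclideanSpace ℝ (Fin d1) → EuclideanSpace ℝ (Fin d2))
    (hystar : ∀ x, IsMaxOn (f x) Set.univ (ystar x)) :
    ∀ (x : EuclideanSpace ℝ (Fin d1)) (y : EuclideanSpace ℝ (Fin d2))
      (v : EuclideanSpace ℝ (Fin d1)) (u : EuclideanSpace ℝ (Fin d2)),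
      ‖gradient (fun x' => f x' (ystar x')) x‖ ^ 2 ≤
        6 * (ℓ / μ) ^ 2 *
            ‖gradient (fun y' => ∫ ω, f x (y' + μ₂ • ω) ∂(stdGaussian d2)) y‖ ^ 2 +
          6 * (‖gradient (fun x' => ∫ ν, f (x' + μ₁ • ν) y ∂(stdGaussian d1)) x - v‖ ^ 2 +
              ‖gradient (fun y' => ∫ ω, f x (y' + μ₂ • ω) ∂(stdGaussian d2)) y - u‖ ^ 2) +
          3 * ‖v‖ ^ 2 +
          3 * (μ₂ ^ 2 * ((ℓ / μ) ^ 2 + 1) / 2 * ℓ ^ 2 * ((d2 : ℝ) + 3) ^ 3 +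
              μ₁ ^ 2 / 2 * ℓ ^ 2 * ((d1 : ℝ) + 3) ^ 3) :=
  zo_vrgda_stmt15_general d1 d2 f ℓ μ μ₁ μ₂ hμ hdiff hlip hconc ystar hystar
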